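/- arXiv:1408.4830 — 6 statements merged into one kernel-verified Lean document; each statement's English description precedes it below -/
import Mathlib

section
/- The number of cuts t(k-1) in the necklace splitting theorem is optimal: for every t ≥ 1 and k ≥ 2 there exist t absolutely continuous probability measures on R such that any partition of R into intervals whose parts can be distributed among k sets, each receiving measure 1/k of every measure, requires at least t(k-1) cut points. -/
open MeasureTheory

/-- The `i`-th interval determined by the (monotone) cut points `x 0 ≤ x 1 ≤ ⋯`. -/
def cutInterval {n : ℕ} (x : Fin n → ℝ) (i : Fin (n + 1)) : Set ℝ :=
  {r : ℝ | (∀ j : Fin n, (j : ℕ) < (i : ℕ) → x j ≤ r) ∧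
    (∀ j : Fin n, (i : ℕ) ≤ (j : ℕ) → r ≤ x j)}

/-- **Optimality of the number of cuts in the necklace splitting theorem.**
For every `t ≥ 1` and `k ≥ 2` there are `t` absolutely continuous probability measures
on `ℝ` such that any partition of `ℝ` into intervals by `n` cut points whose parts can be
distributed among `k` sets, each receiving exactly `1/k` of every measure, satisfies
`n ≥ t(k-1)`. -/
theorem necklace_cuts_optimal (t k : ℕ) (ht : 1 ≤ t) (hk : 2 ≤ k) :
    ∃ μ : Fin t → Measure ℝ,
      (∀ j, IsProbabilityMeasure (μ j)) ∧ (∀ j, μ j ≪ volume) ∧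
      ∀ (n : ℕ) (x : Fin n → ℝ), Monotone x →
        ∀ ℓ : Fin (n + 1) → Fin k,
          (∀ (i : Fin k) (j : Fin t),
            μ j (⋃ r ∈ {r : Fin (n + 1) | ℓ r = i}, cutInterval x r) = (k : ENNReal)⁻¹) →
          t * (k - 1) ≤ n := by
  classical
  refine ⟨fun j => volume.restrict (Set.Ioo (2 * (j : ℕ) : ℝ) (2 * (j : ℕ) + 1)), ?_, ?_, ?_⟩
  · intro j
    constructor
    rw [Measure.restrict_apply_univ, Real.volume_Ioo]
    norm_num
  · intro j
    exact Measure.restrict_le_self.absolutelyContinuous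
  · intro n x hx ℓ hℓ
    simp only at hℓ
    -- points witnessing positive measure
    have exmem : ∀ (j : Fin t) (r : Fin (n + 1)),
        volume.restrict (Set.Ioo (2 * (j : ℕ) : ℝ) (2 * (j : ℕ) + 1)) (cutInterval x r) ≠ 0 →
        ∃ p, p ∈ cutInterval x r ∧ p ∈ Set.Ioo (2 * (j : ℕ) : ℝ) (2 * (j : ℕ) + 1) := by
      intro j r h
      rw [Measure.restrict_apply' measurableSet_Ioo] at h
      obtain ⟨p, hp⟩ := nonempty_of_measure_ne_zero h
      exact ⟨p, hp.1, hp.2⟩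
    set T : Fin t → Finset (Fin n) := fun j =>
      Finset.univ.filter (fun s => x s ∈ Set.Ioo (2 * (j : ℕ) : ℝ) (2 * (j : ℕ) + 1)) with hT
    have hTcard : ∀ j, k - 1 ≤ (T j).card := by
      intro j
      set S : Finset (Fin (n + 1)) := Finset.univ.filter
        (fun r => volume.restrict (Set.Ioo (2 * (j : ℕ) : ℝ) (2 * (j : ℕ) + 1))
          (cutInterval x r) ≠ 0) with hS
      have hSk : k ≤ S.card := by
        have hex : ∀ i : Fin k, ∃ r : Fin (n + 1), ℓ r = i ∧ r ∈ S := by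
          intro i
          have h1 := hℓ i j
          by_contra hcon
          push_neg at hcon
          have hz : volume.restrict (Set.Ioo (2 * (j : ℕ) : ℝ) (2 * (j : ℕ) + 1))
              (⋃ r ∈ {r : Fin (n + 1) | ℓ r = i}, cutInterval x r) = 0 := by
            rw [measure_biUnion_null_iff (Set.to_countable _)]
            intro r hr
            have := hcon r hr
            by_contra hne
            exact absurd (by simpa [hS] using hne) this
          rw [h1] at hz
          have : (k : ENNReal)⁻¹ ≠ 0 := by
            simp [ENNReal.inv_ne_zero]
          exact this hz
        choose f hf1 hf2 using hex
        have hinj : Function.Injective f := by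
          intro a b hab
          rw [← hf1 a, ← hf1 b, hab]
        calc k = (Finset.univ : Finset (Fin k)).card := by simp
          _ ≤ S.card := Finset.card_le_card_of_injOn f (fun i _ => hf2 i) hinj.injOn
      have hne : S.Nonempty := Finset.card_pos.mp (by omega)
      set M := S.max' hne with hM
      have hMS : M ∈ S := S.max'_mem hne
      have hnpos : 0 < n := by
        have : S.card ≤ n + 1 := by
          simpa using Finset.card_le_card (Finset.subset_univ S)
        omega
      have hmaps : ∀ r ∈ S.erase M,
          (fun r : Fin (n + 1) => if h : (r : ℕ) < n then (⟨(r : ℕ), h⟩ : Fin n)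
            else ⟨0, hnpos⟩) r ∈ T j := by
        intro r hr
        have hrS : r ∈ S := Finset.mem_of_mem_erase hr
        have hrM : r ≠ M := Finset.ne_of_mem_erase hr
        have hrle : r ≤ M := S.le_max' r hrS
        have hlt : (r : ℕ) < (M : ℕ) := lt_of_le_of_ne hrle (by simpa [Fin.val_injective.eq_iff] using hrM)
        have hrn : (r : ℕ) < n := lt_of_lt_of_le hlt (Nat.lt_succ_iff.mp M.isLt)
        have hrmem : volume.restrict (Set.Ioo (2 * (j : ℕ) : ℝ) (2 * (j : ℕ) + 1))
            (cutInterval x r) ≠ 0 := by simpa [hS] using hrS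
        have hMmem : volume.restrict (Set.Ioo (2 * (j : ℕ) : ℝ) (2 * (j : ℕ) + 1))
            (cutInterval x M) ≠ 0 := by simpa [hS] using hMS
        obtain ⟨p, hp1, hp2⟩ := exmem j r hrmem
        obtain ⟨q, hq1, hq2⟩ := exmem j M hMmem
        have h1 : p ≤ x ⟨(r : ℕ), hrn⟩ := hp1.2 ⟨(r : ℕ), hrn⟩ (le_refl _)
        have h2 : x ⟨(r : ℕ), hrn⟩ ≤ q := hq1.1 ⟨(r : ℕ), hrn⟩ hlt
        simp only [hT, Finset.mem_filter, Finset.mem_univ, true_and]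
        rw [dif_pos hrn]
        exact ⟨lt_of_lt_of_le hp2.1 h1, lt_of_le_of_lt h2 hq2.2⟩
      have hinj2 : Set.InjOn (fun r : Fin (n + 1) => if h : (r : ℕ) < n then
          (⟨(r : ℕ), h⟩ : Fin n) else ⟨0, hnpos⟩) (S.erase M) := by
        intro a ha b hb hab
        have haM : a ≠ M := Finset.ne_of_mem_erase ha
        have hbM : b ≠ M := Finset.ne_of_mem_erase hb
        have han : (a : ℕ) < n := by
          have := lt_of_le_of_ne (S.le_max' a (Finset.mem_of_mem_erase ha))
            (by simpa [Fin.val_injective.eq_iff] using haM)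
          exact lt_of_lt_of_le this (Nat.lt_succ_iff.mp M.isLt)
        have hbn : (b : ℕ) < n := by
          have := lt_of_le_of_ne (S.le_max' b (Finset.mem_of_mem_erase hb))
            (by simpa [Fin.val_injective.eq_iff] using hbM)
          exact lt_of_lt_of_le this (Nat.lt_succ_iff.mp M.isLt)
        simp only [dif_pos han, dif_pos hbn] at hab
        exact Fin.ext (by simpa using congrArg Fin.val hab)
      have hcard2 : (S.erase M).card ≤ (T j).card :=
        Finset.card_le_card_of_injOn _ hmaps hinj2
      rw [Finset.card_erase_of_mem hMS] at hcard2
      omega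
    -- the T j are pairwise disjoint
    have hdisj : ∀ j j' : Fin t, j ≠ j' → Disjoint (T j) (T j') := by
      intro j j' hjj'
      rw [Finset.disjoint_left]
      intro s hs hs'
      simp only [hT, Finset.mem_filter, Finset.mem_univ, true_and, Set.mem_Ioo] at hs hs'
      have hcast : ((j : ℕ) : ℝ) ≠ ((j' : ℕ) : ℝ) := by
        exact_mod_cast fun h => hjj' (Fin.ext (by exact_mod_cast h))
      rcases lt_or_gt_of_ne hcast with h | h
      · have : ((j : ℕ) : ℝ) + 1 ≤ ((j' : ℕ) : ℝ) := by
          have : (j : ℕ) + 1 ≤ (j' : ℕ) := by exact_mod_cast h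
          exact_mod_cast this
        nlinarith [hs.1, hs.2, hs'.1, hs'.2]
      · have : ((j' : ℕ) : ℝ) + 1 ≤ ((j : ℕ) : ℝ) := by
          have : (j' : ℕ) + 1 ≤ (j : ℕ) := by exact_mod_cast h
          exact_mod_cast this
        nlinarith [hs.1, hs.2, hs'.1, hs'.2]
    calc t * (k - 1) = ∑ _j : Fin t, (k - 1) := by simp [mul_comm]
      _ ≤ ∑ j : Fin t, (T j).card := Finset.sum_le_sum (fun j _ => hTcard j)
      _ = (Finset.univ.biUnion T).card :=
          (Finset.card_biUnion (fun a _ b _ hab => hdisj a b hab)).symm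
      _ ≤ (Finset.univ : Finset (Fin n)).card := Finset.card_le_card (Finset.subset_univ _)
      _ = n := by simp
end

section
/- Let M be a (0,1)-vector of length n with w(M) entries equal to 1, and set t = n + w(M). Then the space C_M of two-colored partitions of R^2 into horizontal strips, where strips labeled 1 in M are additionally cut by a vertical line with the two halves colored oppositely, is Z/2-equivariantly homeomorphic to the sphere S^{t-1}, where the Z/2 action swaps the two colors. -/
/-- The parameter space attached to one strip: a circle (recording the position of the
vertical cut in `[-∞, ∞]` together with the side that goes to `A`, the two infinities
being glued appropriately) for a strip labelled `1`, and a two-point space (which of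
`A`, `B` receives the whole strip) for a strip labelled `0`. -/
def StripData : Bool → Type
  | true => Metric.sphere (0 : ℂ) 1
  | false => Bool

instance : (b : Bool) → TopologicalSpace (StripData b)
  | true => inferInstanceAs (TopologicalSpace (Metric.sphere (0 : ℂ) 1))
  | false => inferInstanceAs (TopologicalSpace Bool)

/-- Swapping the two colours `A` and `B` on the data of a single strip. -/
noncomputable def stripFlip : (b : Bool) → StripData b → StripData b
  | true, z => show Metric.sphere (0 : ℂ) 1 from -(show Metric.sphere (0 : ℂ) 1 from z)
  | false, c => !c

/-- A configuration describing a member of `C_M`: the monotone sequence of strip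
boundaries `⊥ = y 0 ≤ y 1 ≤ ⋯ ≤ y n = ⊤` in `[-∞, ∞]`, together with the colouring data
of each strip. -/
def StripConfig (n : ℕ) (m : Fin n → Bool) : Type :=
  {y : Fin (n + 1) → EReal // Monotone y ∧ y 0 = ⊥ ∧ y (Fin.last n) = ⊤} ×
    ((i : Fin n) → StripData (m i))

noncomputable instance (n : ℕ) (m : Fin n → Bool) : TopologicalSpace (StripConfig n m) :=
  inferInstanceAs (TopologicalSpace
    ({y : Fin (n + 1) → EReal // Monotone y ∧ y 0 = ⊥ ∧ y (Fin.last n) = ⊤} ×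
      ((i : Fin n) → StripData (m i))))

/-- Two configurations are identified when they have the same strip boundaries and agree
on the data of every nondegenerate strip (the data of a strip of zero width is
immaterial). -/
def stripSetoid (n : ℕ) (m : Fin n → Bool) : Setoid (StripConfig n m) where
  r p q := p.1 = q.1 ∧
    ∀ i : Fin n, p.1.1 i.castSucc ≠ p.1.1 i.succ → p.2 i = q.2 i
  iseqv := by
    constructor
    · exact fun p => ⟨rfl, fun i _ => rfl⟩
    · rintro p q ⟨h1, h2⟩
      refine ⟨h1.symm, fun i hi => ?_⟩
      rw [← h1] at hi
      exact (h2 i hi).symm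
    · rintro p q r ⟨h1, h2⟩ ⟨h3, h4⟩
      refine ⟨h1.trans h3, fun i hi => ?_⟩
      refine (h2 i hi).trans (h4 i ?_)
      rwa [← h1]

/-- The space `C_M` of two-coloured strip partitions of `ℝ²` described by the
`(0,1)`-vector `M = m`. -/
def StripPartitionSpace (n : ℕ) (m : Fin n → Bool) : Type :=
  Quotient (stripSetoid n m)

noncomputable instance (n : ℕ) (m : Fin n → Bool) : TopologicalSpace (StripPartitionSpace n m) :=
  inferInstanceAs (TopologicalSpace (Quotient (stripSetoid n m)))

/-- Swapping the two colours `A` and `B` of a configuration. -/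
noncomputable def stripConfigFlip (n : ℕ) (m : Fin n → Bool) (p : StripConfig n m) : StripConfig n m :=
  (p.1, fun i => stripFlip (m i) (p.2 i))


/-!
Compress `[-∞, ∞]` order-isomorphically onto `[0, 1]`; the strip widths `wᵢ` then become
nonnegative numbers with `∑ wᵢ = 1`. Record the colouring data of strip `i` as a unit vector
`uᵢ`, a sign in `ℝ` or the cut position in the circle of `ℂ`, and send a configuration to
`(√wᵢ • uᵢ)ᵢ`. This is the standard description of the join of these spheres as the unit
sphere of the orthogonal sum `ℝ^t`: the map is continuous and onto, it forgets exactly the data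
of strips of width zero, and it turns the colour swap into `v ↦ -v`. A continuous bijection
from the compact quotient to the sphere is a homeomorphism.
-/
open Set Metric

noncomputable def erealOrderIsoIcc : EReal ≃o Icc (0 : ℝ) 1 :=
  ENNReal.logOrderIso.symm.trans ENNReal.orderIsoUnitIntervalBirational

noncomputable def erealCompress (x : EReal) : ℝ := erealOrderIsoIcc x

lemma continuous_erealCompress : Continuous erealCompress :=
  continuous_subtype_val.comp erealOrderIsoIcc.toHomeomorph.continuous

lemma erealCompress_strictMono : StrictMono erealCompress :=
  fun _ _ h => Subtype.coe_lt_coe.2 (erealOrderIsoIcc.strictMono h)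

lemma erealCompress_bot : erealCompress ⊥ = 0 := by
  rw [erealCompress, erealOrderIsoIcc.map_bot]; rfl

lemma erealCompress_top : erealCompress ⊤ = 1 := by
  rw [erealCompress, erealOrderIsoIcc.map_top]; rfl

lemma erealCompress_erealOrderIsoIcc_symm (c : Icc (0 : ℝ) 1) :
    erealCompress (erealOrderIsoIcc.symm c) = c := by
  rw [erealCompress, OrderIso.apply_symm_apply]

lemma sqrt_smul_eq_sqrt_smul_iff {E : Type*} [NormedAddCommGroup E] [NormedSpace ℝ E]
    {a b : ℝ} (ha : 0 ≤ a) (hb : 0 ≤ b) {u v : E} (hu : ‖u‖ = 1) (hv : ‖v‖ = 1) :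
    √a • u = √b • v ↔ a = b ∧ (a ≠ 0 → u = v) := by
  constructor
  · intro h
    have hab : a = b := by
      have := congrArg norm h
      rwa [norm_smul, norm_smul, hu, hv, mul_one, mul_one,
        Real.norm_of_nonneg (Real.sqrt_nonneg _), Real.norm_of_nonneg (Real.sqrt_nonneg _),
        Real.sqrt_inj ha hb] at this
    subst hab
    exact ⟨rfl, fun ha0 => smul_right_injective E (Real.sqrt_ne_zero'.2 (ha.lt_of_ne' ha0)) h⟩
  · rintro ⟨rfl, huv⟩
    rcases eq_or_ne a 0 with rfl | ha0
    · simp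
    · rw [huv ha0]

theorem exists_homeomorph_quotient_of_fibers {X Y : Type*} [TopologicalSpace X] [CompactSpace X]
    [TopologicalSpace Y] [T2Space Y] {s : Setoid X} {f : X → Y} (hf : Continuous f)
    (hsurj : Function.Surjective f) (hfib : ∀ x y, f x = f y ↔ s x y) :
    ∃ h : Quotient s ≃ₜ Y, ∀ x, h (Quotient.mk s x) = f x := by
  let g : Quotient s → Y := Quotient.lift f fun x y hxy => (hfib x y).2 hxy
  have hg : Function.Bijective g :=
    ⟨fun a b => Quotient.inductionOn₂ a b fun x y h => Quotient.sound ((hfib x y).1 h),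
      Function.Surjective.of_comp (g := Quotient.mk s) hsurj⟩
  exact ⟨(hf.quotient_lift _).homeoOfEquivCompactToT2 (f := Equiv.ofBijective g hg),
    fun _ => rfl⟩

def StripAmbient : Bool → Type
  | true => ℂ
  | false => ℝ

noncomputable instance : (b : Bool) → NormedAddCommGroup (StripAmbient b)
  | true => inferInstanceAs (NormedAddCommGroup ℂ)
  | false => inferInstanceAs (NormedAddCommGroup ℝ)

noncomputable instance : (b : Bool) → InnerProductSpace ℝ (StripAmbient b)
  | true => inferInstanceAs (InnerProductSpace ℝ ℂ)
  | false => inferInstanceAs (InnerProductSpace ℝ ℝ)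

instance : (b : Bool) → FiniteDimensional ℝ (StripAmbient b)
  | true => inferInstanceAs (FiniteDimensional ℝ ℂ)
  | false => inferInstanceAs (FiniteDimensional ℝ ℝ)

lemma finrank_stripAmbient (b : Bool) :
    Module.finrank ℝ (StripAmbient b) = if b then 2 else 1 := by
  cases b
  · exact Module.finrank_self ℝ
  · exact Complex.finrank_real_complex

instance : (b : Bool) → Nonempty (StripData b)
  | true => ⟨⟨1, by simp⟩⟩
  | false => ⟨true⟩

instance : (b : Bool) → CompactSpace (StripData b)
  | true => inferInstanceAs (CompactSpace (sphere (0 : ℂ) 1))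
  | false => inferInstanceAs (CompactSpace Bool)

noncomputable def stripUnit : (b : Bool) → StripData b → StripAmbient b
  | true, z => show ℂ from (show sphere (0 : ℂ) 1 from z)
  | false, c => show ℝ from if show Bool from c then 1 else -1

lemma norm_stripUnit (b : Bool) (u : StripData b) : ‖stripUnit b u‖ = 1 := by
  cases b
  · cases u
    · exact (norm_neg (1 : ℝ)).trans norm_one
    · exact (norm_one : ‖(1 : ℝ)‖ = 1)
  · exact mem_sphere_zero_iff_norm.1 (show sphere (0 : ℂ) 1 from u).2

lemma stripUnit_injective (b : Bool) : Function.Injective (stripUnit b) := by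
  cases b
  · intro u v h
    cases u <;> cases v
    · rfl
    · exact absurd (show (-1 : ℝ) = 1 from h) (by norm_num)
    · exact absurd (show (1 : ℝ) = -1 from h) (by norm_num)
    · rfl
  · exact fun u v h => Subtype.ext h

lemma continuous_stripUnit (b : Bool) : Continuous (stripUnit b) := by
  cases b
  · exact continuous_of_discreteTopology (α := Bool)
  · exact continuous_subtype_val

lemma stripUnit_stripFlip (b : Bool) (u : StripData b) :
    stripUnit b (stripFlip b u) = -stripUnit b u := by
  cases b
  · cases u
    · exact (neg_neg (1 : ℝ)).symm
    · rfl
  · rfl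

lemma exists_stripUnit_eq (b : Bool) {v : StripAmbient b} (hv : ‖v‖ = 1) :
    ∃ u, stripUnit b u = v := by
  cases b
  · rcases (abs_eq zero_le_one).1 (show |(show ℝ from v)| = 1 from hv) with h | h
    · exact ⟨show Bool from true, h.symm⟩
    · exact ⟨show Bool from false, h.symm⟩
  · exact ⟨⟨v, mem_sphere_zero_iff_norm.2 hv⟩, rfl⟩

lemma exists_norm_smul_stripUnit_eq (b : Bool) (v : StripAmbient b) :
    ∃ u, ‖v‖ • stripUnit b u = v := by
  rcases eq_or_ne v 0 with rfl | hv
  · exact ⟨Classical.arbitrary _, by simp⟩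
  · have hv' : ‖v‖ ≠ 0 := norm_ne_zero_iff.2 hv
    obtain ⟨u, hu⟩ := exists_stripUnit_eq b (v := ‖v‖⁻¹ • v)
      (by rw [norm_smul, norm_inv, norm_norm, inv_mul_cancel₀ hv'])
    exact ⟨u, by rw [hu, smul_inv_smul₀ hv']⟩

section StripWidth

variable {n : ℕ}

noncomputable def stripWidth (y : Fin (n + 1) → EReal) (i : Fin n) : ℝ :=
  erealCompress (y i.succ) - erealCompress (y i.castSucc)

lemma continuous_stripWidth (i : Fin n) :
    Continuous fun y : Fin (n + 1) → EReal => stripWidth y i :=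
  (continuous_erealCompress.comp (continuous_apply _)).sub
    (continuous_erealCompress.comp (continuous_apply _))

lemma stripWidth_nonneg {y : Fin (n + 1) → EReal} (hy : Monotone y) (i : Fin n) :
    0 ≤ stripWidth y i :=
  sub_nonneg.2 (erealCompress_strictMono.monotone (hy i.castSucc_le_succ))

lemma stripWidth_eq_zero_iff {y : Fin (n + 1) → EReal} {i : Fin n} :
    stripWidth y i = 0 ↔ y i.castSucc = y i.succ := by
  rw [stripWidth, sub_eq_zero, erealCompress_strictMono.injective.eq_iff, eq_comm]

lemma sum_stripWidth (y : Fin (n + 1) → EReal) :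
    ∑ i, stripWidth y i = erealCompress (y (Fin.last n)) - erealCompress (y 0) := by
  simp only [stripWidth, Finset.sum_sub_distrib]
  linarith [Fin.sum_univ_succ (fun k => erealCompress (y k)),
    Fin.sum_univ_castSucc (fun k => erealCompress (y k))]

lemma eq_of_stripWidth_eq {y y' : Fin (n + 1) → EReal} (h0 : y 0 = y' 0)
    (h : stripWidth y = stripWidth y') : y = y' := by
  funext k
  induction k using Fin.induction with
  | zero => exact h0
  | succ i ih =>
    have hi := congrFun h i
    rw [stripWidth, stripWidth, ih, sub_left_inj] at hi
    exact erealCompress_strictMono.injective hi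

lemma exists_stripWidth_eq (d : Fin n → ℝ) (hd : ∀ i, 0 ≤ d i) (hsum : ∑ i, d i = 1) :
    ∃ y : Fin (n + 1) → EReal,
      Monotone y ∧ y 0 = ⊥ ∧ y (Fin.last n) = ⊤ ∧ stripWidth y = d := by
  set c := Fin.partialSum d with hc
  have hc_mono : Monotone c :=
    Fin.monotone_iff_le_succ.2 fun i => by simpa [c, Fin.partialSum_succ] using hd i
  have hc0 : c 0 = 0 := Fin.partialSum_zero d
  have hc_last : c (Fin.last n) = 1 := by
    show ((List.ofFn d).take n).sum = 1
    rw [List.take_of_length_le (List.length_ofFn).le, List.sum_ofFn, hsum]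
  have hc_mem (k : Fin (n + 1)) : c k ∈ Icc (0 : ℝ) 1 :=
    ⟨hc0 ▸ hc_mono (Fin.zero_le k), hc_last ▸ hc_mono (Fin.le_last k)⟩
  set y : Fin (n + 1) → EReal := fun k => erealOrderIsoIcc.symm ⟨c k, hc_mem k⟩
  have hcy (k : Fin (n + 1)) : erealCompress (y k) = c k :=
    erealCompress_erealOrderIsoIcc_symm _
  refine ⟨y, fun a b hab => erealOrderIsoIcc.symm.monotone (hc_mono hab), ?_, ?_, ?_⟩
  · apply erealCompress_strictMono.injective
    rw [hcy, hc0, erealCompress_bot]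
  · apply erealCompress_strictMono.injective
    rw [hcy, hc_last, erealCompress_top]
  · funext i
    rw [stripWidth, hcy, hcy, hc, Fin.partialSum_succ, add_sub_cancel_left]

end StripWidth

section StripVector

variable {n : ℕ} {m : Fin n → Bool}

instance :
    CompactSpace {y : Fin (n + 1) → EReal // Monotone y ∧ y 0 = ⊥ ∧ y (Fin.last n) = ⊤} :=
  isCompact_iff_compactSpace.mp <| IsClosed.isCompact <| isClosed_monotone.inter <|
    (isClosed_eq (continuous_apply 0) continuous_const).inter
      (isClosed_eq (continuous_apply _) continuous_const)

instance : CompactSpace (StripConfig n m) :=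
  inferInstanceAs (CompactSpace (_ × _))

noncomputable def stripVector (p : StripConfig n m) : PiLp 2 fun i => StripAmbient (m i) :=
  WithLp.toLp 2 fun i => √(stripWidth p.1.1 i) • stripUnit (m i) (p.2 i)

lemma stripVector_apply (p : StripConfig n m) (i : Fin n) :
    stripVector p i = √(stripWidth p.1.1 i) • stripUnit (m i) (p.2 i) :=
  rfl

lemma norm_stripVector (p : StripConfig n m) : ‖stripVector p‖ = 1 := by
  have hsq : ‖stripVector p‖ ^ 2 = 1 :=
    calc ‖stripVector p‖ ^ 2 = ∑ i, stripWidth p.1.1 i := by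
          rw [PiLp.norm_sq_eq_of_L2]
          refine Finset.sum_congr rfl fun i _ => ?_
          rw [stripVector_apply, norm_smul, norm_stripUnit, mul_one,
            Real.norm_of_nonneg (Real.sqrt_nonneg _), Real.sq_sqrt (stripWidth_nonneg p.1.2.1 i)]
      _ = 1 := by
          rw [sum_stripWidth, p.1.2.2.2, p.1.2.2.1, erealCompress_top, erealCompress_bot, sub_zero]
  exact (pow_eq_one_iff_of_nonneg (norm_nonneg _) two_ne_zero).1 hsq

lemma stripVector_eq_iff {p q : StripConfig n m} :
    stripVector p = stripVector q ↔ stripSetoid n m p q := by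
  have hcoord (i : Fin n) :
      √(stripWidth p.1.1 i) • stripUnit (m i) (p.2 i) =
          √(stripWidth q.1.1 i) • stripUnit (m i) (q.2 i) ↔
        stripWidth p.1.1 i = stripWidth q.1.1 i ∧
          (p.1.1 i.castSucc ≠ p.1.1 i.succ → p.2 i = q.2 i) := by
    rw [sqrt_smul_eq_sqrt_smul_iff (stripWidth_nonneg p.1.2.1 i) (stripWidth_nonneg q.1.2.1 i)
      (norm_stripUnit _ _) (norm_stripUnit _ _), Ne, stripWidth_eq_zero_iff,
      (stripUnit_injective _).eq_iff]
  rw [stripVector, stripVector, (WithLp.toLp_injective 2).eq_iff, funext_iff,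
    forall_congr' hcoord, forall_and, ← funext_iff]
  constructor
  · rintro ⟨hwidth, hdata⟩
    exact ⟨Subtype.ext (eq_of_stripWidth_eq (p.1.2.2.1.trans q.1.2.2.1.symm) hwidth), hdata⟩
  · rintro ⟨hy, hdata⟩
    exact ⟨by rw [hy], hdata⟩

lemma continuous_stripVector : Continuous (stripVector (m := m)) := by
  refine (PiLp.continuous_toLp 2 _).comp (continuous_pi fun i => .smul ?_ ?_)
  · exact Real.continuous_sqrt.comp
      ((continuous_stripWidth i).comp (continuous_subtype_val.comp continuous_fst))
  · exact (continuous_stripUnit _).comp ((continuous_apply i).comp continuous_snd)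

lemma stripVector_stripConfigFlip (p : StripConfig n m) :
    stripVector (stripConfigFlip n m p) = -stripVector p := by
  ext i
  rw [stripVector_apply, PiLp.neg_apply, stripVector_apply, ← smul_neg]
  exact congrArg _ (stripUnit_stripFlip _ _)

lemma exists_stripVector_eq {v : PiLp 2 fun i => StripAmbient (m i)} (hv : ‖v‖ = 1) :
    ∃ p : StripConfig n m, stripVector p = v := by
  obtain ⟨y, hy, hy0, hy_last, hwidth⟩ :=
    exists_stripWidth_eq (fun i => ‖v i‖ ^ 2) (fun i => by positivity)
      (by rw [← PiLp.norm_sq_eq_of_L2, hv, one_pow])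
  choose u hu using fun i => exists_norm_smul_stripUnit_eq (m i) (v i)
  refine ⟨(⟨y, hy, hy0, hy_last⟩, u), WithLp.ofLp_injective 2 (funext fun i => ?_)⟩
  change √(stripWidth y i) • stripUnit (m i) (u i) = v i
  rw [hwidth, Real.sqrt_sq (norm_nonneg _), hu]

end StripVector

lemma finrank_piLp_stripAmbient {n : ℕ} (m : Fin n → Bool) :
    Module.finrank ℝ (PiLp 2 fun i => StripAmbient (m i)) =
      n + (Finset.univ.filter fun i => m i = true).card := by
  have hdim (i : Fin n) :
      Module.finrank ℝ (StripAmbient (m i)) = 1 + if m i = true then 1 else 0 := by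
    rw [finrank_stripAmbient]
    cases m i <;> rfl
  rw [(WithLp.linearEquiv 2 ℝ _).finrank_eq, Module.finrank_pi_fintype,
    Finset.sum_congr rfl fun i _ => hdim i, Finset.sum_add_distrib, Finset.sum_boole]
  simp

theorem stripPartitionSpace_homeo_sphere_general (n : ℕ) (m : Fin n → Bool)
    (t : ℕ) (ht : t = n + (Finset.univ.filter fun i => m i = true).card) :
    ∃ h : StripPartitionSpace n m ≃ₜ Metric.sphere (0 : EuclideanSpace ℝ (Fin t)) 1,
      ∀ p : StripConfig n m,
        h (Quotient.mk (stripSetoid n m) (stripConfigFlip n m p)) =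
          -(h (Quotient.mk (stripSetoid n m) p)) := by
  let L := ((stdOrthonormalBasis ℝ (PiLp 2 fun i => StripAmbient (m i))).reindex
    (finCongr ((finrank_piLp_stripAmbient m).trans ht.symm))).repr
  let f (p : StripConfig n m) : sphere (0 : EuclideanSpace ℝ (Fin t)) 1 :=
    ⟨L (stripVector p), by rw [mem_sphere_zero_iff_norm, L.norm_map, norm_stripVector]⟩
  have hsurj : Function.Surjective f := fun w => by
    obtain ⟨p, hp⟩ := exists_stripVector_eq (m := m)
      (v := L.symm w) (by rw [L.symm.norm_map, norm_eq_of_mem_sphere])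
    exact ⟨p, Subtype.ext (by simp [f, hp])⟩
  have hfib (p q : StripConfig n m) : f p = f q ↔ stripSetoid n m p q := by
    rw [Subtype.ext_iff, L.injective.eq_iff, stripVector_eq_iff]
  obtain ⟨h, hh⟩ :
      ∃ h : StripPartitionSpace n m ≃ₜ sphere (0 : EuclideanSpace ℝ (Fin t)) 1,
        ∀ p, h (Quotient.mk _ p) = f p :=
    exists_homeomorph_quotient_of_fibers
      ((L.continuous.comp continuous_stripVector).subtype_mk _) hsurj hfib
  refine ⟨h, fun p => ?_⟩
  rw [hh, hh]
  exact Subtype.ext (by simp [f, stripVector_stripConfigFlip])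

/-- For a `(0,1)`-vector `M` of length `n` with `w(M)` ones and `t = n + w(M)`, the space
`C_M` is `ℤ/2`-equivariantly homeomorphic to the sphere `S^{t-1}`, where the `ℤ/2`-action
swaps the two colours on `C_M` and is the antipodal action on the sphere. -/
theorem stripPartitionSpace_homeo_sphere (n : ℕ) (hn : 1 ≤ n) (m : Fin n → Bool)
    (t : ℕ) (ht : t = n + (Finset.univ.filter fun i => m i = true).card) :
    ∃ h : StripPartitionSpace n m ≃ₜ Metric.sphere (0 : EuclideanSpace ℝ (Fin t)) 1,
      ∀ p : StripConfig n m,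
        h (Quotient.mk (stripSetoid n m) (stripConfigFlip n m p)) =
          -(h (Quotient.mk (stripSetoid n m) p)) :=
  stripPartitionSpace_homeo_sphere_general n m t ht
end

section
/- For any positive integer n, any Y ∈ V^n_d, and any k ≥ 2, the labelled partition space C^n_{Y,k} is Σ_k-equivariantly homeomorphic to the (n+1)-fold topological join EG^n = [k] * [k] * ... * [k] of a k-point discrete set, where Σ_k acts on C^n_{Y,k} by permuting the labels and on EG^n by acting on each join factor. -/
open unitInterval

inductive JoinRel (X Y : Type*) : X × Y × I → X × Y × I → Prop
  | zero (x : X) (y y' : Y) : JoinRel X Y (x, y, 0) (x, y', 0)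
  | one (x x' : X) (y : Y) : JoinRel X Y (x, y, 1) (x', y, 1)

/-- The topological join of two spaces. -/
def TopJoin (X Y : Type*) : Type _ :=
  Quot (JoinRel X Y)

instance (X Y : Type*) [TopologicalSpace X] [TopologicalSpace Y] :
    TopologicalSpace (TopJoin X Y) :=
  inferInstanceAs (TopologicalSpace (Quot (JoinRel X Y)))

/-- Functoriality of the topological join. -/
def TopJoin.map {X Y X' Y' : Type*} (f : X → X') (g : Y → Y') :
    TopJoin X Y → TopJoin X' Y' :=
  Quot.map (fun p => (f p.1, g p.2.1, p.2.2)) (by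
    rintro a b h
    cases h with
    | zero x y y' => exact JoinRel.zero (f x) (g y) (g y')
    | one x x' y => exact JoinRel.one (f x) (f x') (g y))

/-- `nJoin X n` is the `(n+1)`-fold topological join `X * X * ⋯ * X`. -/
def nJoin (X : Type*) : ℕ → Type _
  | 0 => X
  | n + 1 => TopJoin X (nJoin X n)

instance nJoin.instTopologicalSpace (X : Type*) [TopologicalSpace X] :
    (n : ℕ) → TopologicalSpace (nJoin X n)
  | 0 => inferInstanceAs (TopologicalSpace X)
  | n + 1 =>
    letI := nJoin.instTopologicalSpace X n
    inferInstanceAs (TopologicalSpace (TopJoin X (nJoin X n)))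

/-- The induced self-map of the iterated join coming from a self-map of `X`. -/
def nJoinMap {X : Type*} (f : X → X) : (n : ℕ) → nJoin X n → nJoin X n
  | 0 => f
  | n + 1 => TopJoin.map f (nJoinMap f n)

/-- A scheme of `n` nested hyperplane cuts of `ℝ^d` with prescribed directions. -/
inductive CutTree (d : ℕ) : ℕ → Type
  | leaf : CutTree d 0
  | node {j l : ℕ} (v : EuclideanSpace ℝ (Fin d)) (hv : v ≠ 0)
      (Y₁ : CutTree d j) (Y₂ : CutTree d l) : CutTree d (j + l + 1)

/-- The parameters describing a labelled nested partition in `C^n_{Y,k}`: a label in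
`[k]` for the single piece of the trivial partition, and, for a cut scheme
`Y = (v, Y₁, Y₂)`, the offset of the cutting hyperplane (an `EReal`, the values `±∞`
meaning the hyperplane is at infinity) together with parameters for the two sides. -/
def CutParam (k : ℕ) {d : ℕ} : {n : ℕ} → CutTree d n → Type
  | _, .leaf => Fin k
  | _, .node _ _ Y₁ Y₂ => EReal × CutParam k Y₁ × CutParam k Y₂

noncomputable instance CutParam.instTopologicalSpace (k : ℕ) {d : ℕ} :
    {n : ℕ} → (Y : CutTree d n) → TopologicalSpace (CutParam k Y)
  | _, .leaf => inferInstanceAs (TopologicalSpace (Fin k))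
  | _, .node _ _ Y₁ Y₂ =>
    letI := CutParam.instTopologicalSpace k Y₁
    letI := CutParam.instTopologicalSpace k Y₂
    inferInstanceAs (TopologicalSpace (EReal × CutParam k Y₁ × CutParam k Y₂))

/-- The identifications defining `C^n_{Y,k}`: when the hyperplane is at `+∞` the data of
the upper side is forgotten, and when it is at `-∞` the data of the lower side is
forgotten. -/
def cutParamRel (k : ℕ) {d : ℕ} :
    {n : ℕ} → (Y : CutTree d n) → CutParam k Y → CutParam k Y → Prop
  | _, .leaf => Eq
  | _, .node _ _ Y₁ Y₂ => fun p q =>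
      p.1 = q.1 ∧ (p.1 = ⊤ ∨ cutParamRel k Y₁ p.2.1 q.2.1) ∧
        (p.1 = ⊥ ∨ cutParamRel k Y₂ p.2.2 q.2.2)

/-- The space `C^n_{Y,k}` of labelled nested partitions. -/
def LabelledPartitionSpace (k : ℕ) {d n : ℕ} (Y : CutTree d n) : Type :=
  Quot (cutParamRel k Y)

noncomputable instance (k : ℕ) {d n : ℕ} (Y : CutTree d n) :
    TopologicalSpace (LabelledPartitionSpace k Y) :=
  inferInstanceAs (TopologicalSpace (Quot (cutParamRel k Y)))

/-- The action of a permutation `sg ∈ Σ_k` on the parameters, permuting all labels. -/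
def cutRelabel (k : ℕ) {d : ℕ} (sg : Equiv.Perm (Fin k)) :
    {n : ℕ} → (Y : CutTree d n) → CutParam k Y → CutParam k Y
  | _, .leaf => fun a => sg a
  | _, .node _ _ Y₁ Y₂ => fun p =>
      (p.1, cutRelabel k sg Y₁ p.2.1, cutRelabel k sg Y₂ p.2.2)

/-!
Both spaces are realised inside the same space of matrices `w : ι → Fin k → ℝ`:
nonnegative entries of total mass `1`, each row supported on a single label, the `n + 1` rows being
the regions cut out by `Y`, respectively the factors of the join. A point `∑ tᵢ xᵢ` of a join
becomes the matrix with rows `tᵢ • e_{xᵢ}`; a labelled partition whose first cut has offset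
`c ∈ [-∞, ∞]` becomes the matrices of its two sides weighted by `1 - s` and `s`, where `s ∈ [0, 1]`
is the image of `c` under an order isomorphism `EReal ≃o [0, 1]`. The identifications at `c = ±∞`,
like those of a join at the ends of `[0, 1]`, are exactly the collapses caused by a zero weight.
Both realisations are continuous bijections from compact spaces onto the model, hence
homeomorphisms, and both turn the action of `Σ_k` into the permutation of columns. The two index
sets have `n + 1` elements, so the models are identified by a reindexing.
-/

open Function Set

section JoinModel

def joinModel (ι α : Type*) [Fintype ι] [Fintype α] : Set (ι → α → ℝ) :=
  {w | (∀ i a, 0 ≤ w i a) ∧ ∑ i, ∑ a, w i a = 1 ∧ ∀ i, ∃ x, ∀ b, b ≠ x → w i b = 0}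

variable {ι κ ι' α : Type*}

def joinStep (t : I) (u : ι → α → ℝ) (v : κ → α → ℝ) : ι ⊕ κ → α → ℝ :=
  Sum.elim ((1 - (t : ℝ)) • u) ((t : ℝ) • v)

lemma joinStep_congr {t t' : I} {u u' : ι → α → ℝ} {v v' : κ → α → ℝ} (ht : t = t')
    (hu : t = 1 ∨ u = u') (hv : t = 0 ∨ v = v') : joinStep t u v = joinStep t' u' v' := by
  subst ht
  unfold joinStep
  congr 1
  · rcases hu with rfl | rfl <;> simp
  · rcases hv with rfl | rfl <;> simp

lemma continuous_joinStep :
    Continuous fun p : I × (ι → α → ℝ) × (κ → α → ℝ) => joinStep p.1 p.2.1 p.2.2 := by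
  refine continuous_pi fun i => ?_
  cases i <;> simp only [joinStep, Sum.elim_inl, Sum.elim_inr, Pi.smul_apply] <;> fun_prop

def relabel (τ : Equiv.Perm α) (w : ι → α → ℝ) : ι → α → ℝ := fun i a => w i (τ.symm a)

lemma joinStep_relabel (τ : Equiv.Perm α) (t : I) (u : ι → α → ℝ) (v : κ → α → ℝ) :
    joinStep t (relabel τ u) (relabel τ v) = relabel τ (joinStep t u v) := by
  funext i a
  cases i <;> rfl

lemma joinStep_eq_joinStep_iff [Fintype κ] [Fintype α] {t t' : I} {u u' : ι → α → ℝ}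
    {v v' : κ → α → ℝ} (hv : ∑ i, ∑ a, v i a = 1) (hv' : ∑ i, ∑ a, v' i a = 1) :
    joinStep t u v = joinStep t' u' v' ↔ t = t' ∧ (t = 1 ∨ u = u') ∧ (t = 0 ∨ v = v') := by
  refine ⟨fun h => ?_, fun ⟨ht, hu, hv⟩ => joinStep_congr ht hu hv⟩
  obtain ⟨hleft, hright⟩ := Sum.elim_eq_iff.1 h
  have ht : t = t' := by
    have := congrArg (fun w : κ → α → ℝ => ∑ i, ∑ a, w i a) hright
    simp only [Pi.smul_apply, smul_eq_mul, ← Finset.mul_sum, hv, hv', mul_one] at this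
    exact Subtype.ext this
  subst ht
  refine ⟨rfl, or_iff_not_imp_left.2 fun h1 => ?_, or_iff_not_imp_left.2 fun h0 => ?_⟩
  · refine smul_right_injective _ (sub_ne_zero.2 fun h => h1 ?_) hleft
    exact Subtype.ext h.symm
  · exact smul_right_injective _ (fun h => h0 (Subtype.ext h)) hright

section Vertex

variable [DecidableEq α]

def vertex (x : α) : Unit → α → ℝ := fun _ => Pi.single x 1

lemma vertex_injective : Injective (vertex : α → Unit → α → ℝ) := fun x y h => by
  simpa [vertex, Pi.single_apply, eq_comm] using congrFun (congrFun h ()) x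

lemma vertex_relabel (τ : Equiv.Perm α) (x : α) : relabel τ (vertex x) = vertex (τ x) := by
  funext _ a
  simp [relabel, vertex, Pi.single_apply, Equiv.symm_apply_eq]

end Vertex

variable [Fintype ι] [Fintype κ] [Fintype ι'] [Fintype α]

lemma nonempty_of_mem_joinModel {w : ι → α → ℝ} (hw : w ∈ joinModel ι α) : Nonempty α := by
  by_contra h
  rw [not_nonempty_iff] at h
  simpa using hw.2.1

lemma joinModel_nonempty [Nonempty ι] [Nonempty α] : (joinModel ι α).Nonempty := by
  classical
  obtain ⟨i₀⟩ := ‹Nonempty ι›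
  obtain ⟨a₀⟩ := ‹Nonempty α›
  refine ⟨fun i a => if i = i₀ ∧ a = a₀ then 1 else 0, fun i a => ?_, ?_,
    fun i => ⟨a₀, fun b hb => by simp [hb]⟩⟩
  · dsimp only
    split_ifs <;> norm_num
  · simp [ite_and, Finset.sum_ite_eq']

lemma comp_equiv_mem_joinModel {w : ι → α → ℝ} (hw : w ∈ joinModel ι α) (e : ι' ≃ ι) :
    w ∘ e ∈ joinModel ι' α :=
  ⟨fun i => hw.1 (e i), (e.sum_comp fun i => ∑ a, w i a).trans hw.2.1, fun i => hw.2.2 (e i)⟩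

lemma exists_mem_joinModel_smul_eq [Nonempty ι] [Nonempty α] {w : ι → α → ℝ}
    (hnonneg : ∀ i a, 0 ≤ w i a) (hrow : ∀ i, ∃ x, ∀ b, b ≠ x → w i b = 0) :
    ∃ u ∈ joinModel ι α, (∑ i, ∑ a, w i a) • u = w := by
  set c := ∑ i, ∑ a, w i a
  by_cases hc : c = 0
  · have hw : w = 0 := by
      have := (Finset.sum_eq_zero_iff_of_nonneg fun i _ =>
        Finset.sum_nonneg fun a _ => hnonneg i a).1 hc
      funext i a
      exact (Finset.sum_eq_zero_iff_of_nonneg fun a _ => hnonneg i a).1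
        (this i (Finset.mem_univ _)) a (Finset.mem_univ _)
    obtain ⟨u, hu⟩ := joinModel_nonempty (ι := ι) (α := α)
    exact ⟨u, hu, by rw [hc, zero_smul, hw]⟩
  · refine ⟨c⁻¹ • w, ⟨fun i a => ?_, ?_, fun i => ?_⟩, smul_inv_smul₀ hc w⟩
    · exact mul_nonneg (inv_nonneg.2 (Finset.sum_nonneg fun i _ =>
        Finset.sum_nonneg fun a _ => hnonneg i a)) (hnonneg i a)
    · simp only [Pi.smul_apply, smul_eq_mul, ← Finset.mul_sum]
      exact inv_mul_cancel₀ hc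
    · obtain ⟨x, hx⟩ := hrow i
      exact ⟨x, fun b hb => by simp [hx b hb]⟩

lemma joinStep_mem {t : I} {u : ι → α → ℝ} {v : κ → α → ℝ} (hu : u ∈ joinModel ι α)
    (hv : v ∈ joinModel κ α) : joinStep t u v ∈ joinModel (ι ⊕ κ) α := by
  refine ⟨?_, ?_, ?_⟩
  · rintro (i | i) a
    · exact mul_nonneg (one_minus_nonneg t) (hu.1 i a)
    · exact mul_nonneg t.2.1 (hv.1 i a)
  · simp [joinStep, Fintype.sum_sum_type, ← Finset.mul_sum, hu.2.1, hv.2.1]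
  · rintro (i | i)
    · obtain ⟨x, hx⟩ := hu.2.2 i
      exact ⟨x, fun b hb => by simp [joinStep, hx b hb]⟩
    · obtain ⟨x, hx⟩ := hv.2.2 i
      exact ⟨x, fun b hb => by simp [joinStep, hx b hb]⟩

lemma exists_joinStep_eq [Nonempty ι] [Nonempty κ] {w : ι ⊕ κ → α → ℝ}
    (hw : w ∈ joinModel (ι ⊕ κ) α) :
    ∃ t u v, u ∈ joinModel ι α ∧ v ∈ joinModel κ α ∧ joinStep t u v = w := by
  have := nonempty_of_mem_joinModel hw
  obtain ⟨hnonneg, hsum, hrow⟩ := hw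
  obtain ⟨u, hu, hwu⟩ := exists_mem_joinModel_smul_eq (fun i => hnonneg (.inl i))
    fun i => hrow (.inl i)
  obtain ⟨v, hv, hwv⟩ := exists_mem_joinModel_smul_eq (fun i => hnonneg (.inr i))
    fun i => hrow (.inr i)
  have hmass : ∑ i, ∑ a, w (.inl i) a + ∑ i, ∑ a, w (.inr i) a = 1 := by
    rw [← Fintype.sum_sum_type (fun i => ∑ a, w i a)]
    exact hsum
  have hl : 0 ≤ ∑ i, ∑ a, w (.inl i) a :=
    Finset.sum_nonneg fun i _ => Finset.sum_nonneg fun a _ => hnonneg _ a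
  have hr : 0 ≤ ∑ i, ∑ a, w (.inr i) a :=
    Finset.sum_nonneg fun i _ => Finset.sum_nonneg fun a _ => hnonneg _ a
  rw [eq_sub_of_add_eq hmass] at hwu
  refine ⟨⟨_, hr, by linarith⟩, u, v, hu, hv, funext fun i => ?_⟩
  rcases i with i | i
  · exact congrFun hwu i
  · exact congrFun hwv i

lemma range_vertex [DecidableEq α] : range (vertex : α → Unit → α → ℝ) = joinModel Unit α := by
  ext w
  constructor
  · rintro ⟨x, rfl⟩
    refine ⟨fun _ a => ?_, by simp [vertex], fun _ => ⟨x, fun b hb => by simp [vertex, hb]⟩⟩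
    simp only [vertex, Pi.single_apply]
    split_ifs <;> norm_num
  · rintro ⟨-, hsum, hrow⟩
    obtain ⟨x, hx⟩ := hrow ()
    refine ⟨x, funext fun _ => funext fun a => ?_⟩
    have hx1 : w () x = 1 := by
      simpa [Finset.sum_eq_single x fun b _ hb => hx b hb] using hsum
    rcases eq_or_ne a x with rfl | ha
    · simp [vertex, hx1]
    · simp [vertex, ha, hx a ha]

end JoinModel

namespace TopJoin

variable {X Y ι κ α : Type*}

lemma mk_eq_mk {x x' : X} {y y' : Y} {t t' : I} (ht : t = t') (hx : t = 1 ∨ x = x')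
    (hy : t = 0 ∨ y = y') :
    (Quot.mk _ (x, y, t) : TopJoin X Y) = Quot.mk _ (x', y', t') := by
  subst ht
  rcases hx with rfl | rfl
  · obtain rfl : y = y' := hy.resolve_left one_ne_zero
    exact Quot.sound (JoinRel.one x x' y)
  · rcases hy with rfl | rfl
    · exact Quot.sound (JoinRel.zero x y y')
    · rfl

def toModel (f : X → ι → α → ℝ) (g : Y → κ → α → ℝ) : TopJoin X Y → ι ⊕ κ → α → ℝ :=
  Quot.lift (fun p => joinStep p.2.2 (f p.1) (g p.2.1)) fun _ _ h => by
    cases h with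
    | zero x y y' => exact joinStep_congr rfl (.inr rfl) (.inl rfl)
    | one x x' y => exact joinStep_congr rfl (.inl rfl) (.inr rfl)

variable {f : X → ι → α → ℝ} {g : Y → κ → α → ℝ}

lemma continuous_toModel [TopologicalSpace X] [TopologicalSpace Y] (hf : Continuous f)
    (hg : Continuous g) : Continuous (toModel f g) :=
  continuous_quot_lift _ <|
    continuous_joinStep.comp (f := fun p : X × Y × I => (p.2.2, f p.1, g p.2.1)) (by fun_prop)

lemma toModel_map (τ : Equiv.Perm α) {φ : X → X} {ψ : Y → Y}
    (hf : ∀ x, f (φ x) = relabel τ (f x)) (hg : ∀ y, g (ψ y) = relabel τ (g y))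
    (z : TopJoin X Y) : toModel f g (TopJoin.map φ ψ z) = relabel τ (toModel f g z) := by
  induction z using Quot.ind with
  | mk p => exact (congrArg₂ _ (hf p.1) (hg p.2.1)).trans (joinStep_relabel τ _ _ _)

lemma toModel_injective [Fintype κ] [Fintype α] (hg : ∀ y, g y ∈ joinModel κ α)
    (hf' : Injective f) (hg' : Injective g) : Injective (toModel f g) := by
  rintro ⟨x, y, t⟩ ⟨x', y', t'⟩ h
  obtain ⟨ht, hx, hy⟩ := (joinStep_eq_joinStep_iff (hg y).2.1 (hg y').2.1).1 h
  exact mk_eq_mk ht (hx.imp_right (hf' ·)) (hy.imp_right (hg' ·))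

lemma range_toModel [Fintype ι] [Fintype κ] [Fintype α] [Nonempty ι] [Nonempty κ]
    (hf : range f = joinModel ι α) (hg : range g = joinModel κ α) :
    range (toModel f g) = joinModel (ι ⊕ κ) α := by
  refine Subset.antisymm ?_ fun w hw => ?_
  · rintro _ ⟨⟨x, y, t⟩, rfl⟩
    exact joinStep_mem (hf ▸ mem_range_self x) (hg ▸ mem_range_self y)
  · obtain ⟨t, u, v, hu, hv, rfl⟩ := exists_joinStep_eq hw
    obtain ⟨x, rfl⟩ := hf ▸ hu
    obtain ⟨y, rfl⟩ := hg ▸ hv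
    exact ⟨Quot.mk _ (x, y, t), rfl⟩

end TopJoin

noncomputable def Continuous.homeoOfRangeEq {X Z : Type*} [TopologicalSpace X] [CompactSpace X]
    [TopologicalSpace Z] [T2Space Z] {f : X → Z} {S : Set Z} (hf : Continuous f)
    (hinj : Injective f) (hrange : range f = S) : X ≃ₜ S :=
  (hf.isClosedEmbedding hinj).isEmbedding.toHomeomorph.trans (Homeomorph.setCongr hrange)

def joinModelCongr {ι ι' α : Type*} [Fintype ι] [Fintype ι'] [Fintype α] (e : ι ≃ ι') :
    joinModel ι α ≃ₜ joinModel ι' α where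
  toFun w := ⟨fun i => w.1 (e.symm i), comp_equiv_mem_joinModel w.2 e.symm⟩
  invFun w := ⟨fun i => w.1 (e i), comp_equiv_mem_joinModel w.2 e⟩
  left_inv w := Subtype.ext <| funext fun i => congrArg w.1 (e.symm_apply_apply i)
  right_inv w := Subtype.ext <| funext fun i => congrArg w.1 (e.apply_symm_apply i)
  continuous_toFun := by
    refine Continuous.subtype_mk ?_ _
    exact continuous_pi fun i => (continuous_apply _).comp continuous_subtype_val
  continuous_invFun := by
    refine Continuous.subtype_mk ?_ _
    exact continuous_pi fun i => (continuous_apply _).comp continuous_subtype_val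

section NJoin

def nJoinIndex : ℕ → Type
  | 0 => Unit
  | n + 1 => Unit ⊕ nJoinIndex n

instance nJoinIndex.instFintype : (n : ℕ) → Fintype (nJoinIndex n)
  | 0 => inferInstanceAs (Fintype Unit)
  | n + 1 =>
    letI := nJoinIndex.instFintype n
    inferInstanceAs (Fintype (Unit ⊕ nJoinIndex n))

instance (n : ℕ) : Nonempty (nJoinIndex n) := by
  cases n
  exacts [⟨()⟩, ⟨.inl ()⟩]

lemma card_nJoinIndex : (n : ℕ) → Fintype.card (nJoinIndex n) = n + 1
  | 0 => Fintype.card_unit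
  | n + 1 => (Fintype.card_sum (α := Unit) (β := nJoinIndex n)).trans <| by
    rw [card_nJoinIndex n, Fintype.card_unit, add_comm]

variable (α : Type*) [DecidableEq α]

def nJoinModel : (n : ℕ) → nJoin α n → nJoinIndex n → α → ℝ
  | 0 => (vertex : α → Unit → α → ℝ)
  | n + 1 => TopJoin.toModel vertex (nJoinModel n)

lemma range_nJoinModel [Fintype α] :
    (n : ℕ) → range (nJoinModel α n) = joinModel (nJoinIndex n) α
  | 0 => range_vertex (α := α)
  | n + 1 => TopJoin.range_toModel range_vertex (range_nJoinModel n)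

lemma nJoinModel_injective [Fintype α] : (n : ℕ) → Injective (nJoinModel α n)
  | 0 => vertex_injective (α := α)
  | n + 1 => TopJoin.toModel_injective (fun y => range_nJoinModel α n ▸ mem_range_self y)
      vertex_injective (nJoinModel_injective n)

lemma nJoinModel_nJoinMap (τ : Equiv.Perm α) :
    (n : ℕ) → (z : nJoin α n) → nJoinModel α n (nJoinMap τ n z) = relabel τ (nJoinModel α n z)
  | 0, x => (vertex_relabel τ (x : α)).symm
  | n + 1, z => TopJoin.toModel_map τ (fun x => (vertex_relabel τ x).symm)
      (nJoinModel_nJoinMap τ n) z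

variable [TopologicalSpace α]

instance nJoin.instCompactSpace [CompactSpace α] : (n : ℕ) → CompactSpace (nJoin α n)
  | 0 => inferInstanceAs (CompactSpace α)
  | n + 1 =>
    haveI := nJoin.instCompactSpace n
    inferInstanceAs (CompactSpace (Quot (JoinRel α (nJoin α n))))

variable [DiscreteTopology α]

lemma continuous_nJoinModel : (n : ℕ) → Continuous (nJoinModel α n)
  | 0 => continuous_of_discreteTopology (α := α)
  | n + 1 => TopJoin.continuous_toModel continuous_of_discreteTopology (continuous_nJoinModel n)

noncomputable def nJoinHomeo [Fintype α] (n : ℕ) : nJoin α n ≃ₜ joinModel (nJoinIndex n) α :=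
  (continuous_nJoinModel α n).homeoOfRangeEq (nJoinModel_injective α n) (range_nJoinModel α n)

lemma nJoinHomeo_nJoinMap [Fintype α] (τ : Equiv.Perm α) (n : ℕ) (z : nJoin α n) :
    (nJoinHomeo α n (nJoinMap τ n z) : nJoinIndex n → α → ℝ) = relabel τ (nJoinHomeo α n z) :=
  nJoinModel_nJoinMap α τ n z

end NJoin

namespace CutTree

variable {d : ℕ}

def Leaf : {n : ℕ} → CutTree d n → Type
  | _, .leaf => Unit
  | _, .node _ _ Y₁ Y₂ => Leaf Y₁ ⊕ Leaf Y₂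

instance instFintypeLeaf : {n : ℕ} → (Y : CutTree d n) → Fintype Y.Leaf
  | _, .leaf => inferInstanceAs (Fintype Unit)
  | _, .node _ _ Y₁ Y₂ =>
    letI := instFintypeLeaf Y₁
    letI := instFintypeLeaf Y₂
    inferInstanceAs (Fintype (Y₁.Leaf ⊕ Y₂.Leaf))

instance instNonemptyLeaf : {n : ℕ} → (Y : CutTree d n) → Nonempty Y.Leaf
  | _, .leaf => ⟨()⟩
  | _, .node _ _ Y₁ _ =>
    letI := instNonemptyLeaf Y₁
    inferInstanceAs (Nonempty (Y₁.Leaf ⊕ _))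

lemma card_leaf : {n : ℕ} → (Y : CutTree d n) → Fintype.card Y.Leaf = n + 1
  | _, .leaf => Fintype.card_unit
  | _, .node _ _ Y₁ Y₂ => (Fintype.card_sum (α := Y₁.Leaf) (β := Y₂.Leaf)).trans <| by
    rw [card_leaf Y₁, card_leaf Y₂]
    omega

end CutTree

noncomputable def erealOrderIsoUnitInterval : EReal ≃o I :=
  EReal.expOrderIso.trans ENNReal.orderIsoUnitIntervalBirational

lemma erealOrderIsoUnitInterval_eq_one_iff {x : EReal} :
    erealOrderIsoUnitInterval x = 1 ↔ x = ⊤ :=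
  map_eq_top_iff erealOrderIsoUnitInterval

lemma erealOrderIsoUnitInterval_eq_zero_iff {x : EReal} :
    erealOrderIsoUnitInterval x = 0 ↔ x = ⊥ :=
  map_eq_bot_iff erealOrderIsoUnitInterval

section CutModel

variable (k : ℕ) {d : ℕ}

noncomputable def cutModel : {n : ℕ} → (Y : CutTree d n) → CutParam k Y → Y.Leaf → Fin k → ℝ
  | _, .leaf, x => vertex x
  | _, .node _ _ Y₁ Y₂, p =>
    joinStep (erealOrderIsoUnitInterval p.1) (cutModel Y₁ p.2.1) (cutModel Y₂ p.2.2)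

lemma range_cutModel :
    {n : ℕ} → (Y : CutTree d n) → range (cutModel k Y) = joinModel Y.Leaf (Fin k)
  | _, .leaf => range_vertex (α := Fin k)
  | _, .node _ _ Y₁ Y₂ => by
    refine Subset.antisymm ?_ fun w hw => ?_
    · rintro _ ⟨p, rfl⟩
      exact joinStep_mem (range_cutModel Y₁ ▸ mem_range_self _)
        (range_cutModel Y₂ ▸ mem_range_self _)
    · obtain ⟨t, u, v, hu, hv, rfl⟩ := exists_joinStep_eq hw
      obtain ⟨p₁, rfl⟩ := range_cutModel Y₁ ▸ hu
      obtain ⟨p₂, rfl⟩ := range_cutModel Y₂ ▸ hv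
      exact ⟨(erealOrderIsoUnitInterval.symm t, p₁, p₂),
        congrArg (joinStep · _ _) (erealOrderIsoUnitInterval.apply_symm_apply t)⟩

lemma cutModel_eq_cutModel_iff : {n : ℕ} → (Y : CutTree d n) → (p q : CutParam k Y) →
    cutModel k Y p = cutModel k Y q ↔ cutParamRel k Y p q
  | _, .leaf, x, y => vertex_injective.eq_iff
  | _, .node _ _ Y₁ Y₂, p, q => by
    obtain ⟨e, p₁, p₂⟩ := p
    obtain ⟨e', q₁, q₂⟩ := q
    refine (joinStep_eq_joinStep_iff (range_cutModel k Y₂ ▸ mem_range_self p₂).2.1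
      (range_cutModel k Y₂ ▸ mem_range_self q₂).2.1).trans ?_
    rw [cutModel_eq_cutModel_iff Y₁, cutModel_eq_cutModel_iff Y₂,
      erealOrderIsoUnitInterval.injective.eq_iff, erealOrderIsoUnitInterval_eq_one_iff,
      erealOrderIsoUnitInterval_eq_zero_iff]
    rfl

lemma cutModel_cutRelabel (τ : Equiv.Perm (Fin k)) :
    {n : ℕ} → (Y : CutTree d n) → (p : CutParam k Y) →
      cutModel k Y (cutRelabel k τ Y p) = relabel τ (cutModel k Y p)
  | _, .leaf, x => (vertex_relabel τ x).symm
  | _, .node _ _ Y₁ Y₂, p =>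
    (congrArg₂ (joinStep _) (cutModel_cutRelabel τ Y₁ p.2.1)
      (cutModel_cutRelabel τ Y₂ p.2.2)).trans (joinStep_relabel τ _ _ _)

lemma continuous_cutModel : {n : ℕ} → (Y : CutTree d n) → Continuous (cutModel k Y)
  | _, .leaf => continuous_of_discreteTopology (α := Fin k)
  | _, .node _ _ Y₁ Y₂ =>
    continuous_joinStep.comp <|
      (erealOrderIsoUnitInterval.toHomeomorph.continuous.comp continuous_fst).prodMk <|
        ((continuous_cutModel Y₁).comp (continuous_fst.comp continuous_snd)).prodMk
          ((continuous_cutModel Y₂).comp (continuous_snd.comp continuous_snd))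

instance CutParam.instCompactSpace :
    {n : ℕ} → (Y : CutTree d n) → CompactSpace (CutParam k Y)
  | _, .leaf => inferInstanceAs (CompactSpace (Fin k))
  | _, .node _ _ Y₁ Y₂ =>
    haveI := CutParam.instCompactSpace Y₁
    haveI := CutParam.instCompactSpace Y₂
    inferInstanceAs (CompactSpace (EReal × CutParam k Y₁ × CutParam k Y₂))

instance {n : ℕ} (Y : CutTree d n) : CompactSpace (LabelledPartitionSpace k Y) :=
  inferInstanceAs (CompactSpace (Quot (cutParamRel k Y)))

noncomputable def labelledPartitionSpaceHomeo {n : ℕ} (Y : CutTree d n) :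
    LabelledPartitionSpace k Y ≃ₜ joinModel Y.Leaf (Fin k) :=
  Continuous.homeoOfRangeEq (f := Quot.lift (cutModel k Y)
      fun p q => (cutModel_eq_cutModel_iff k Y p q).2)
    (continuous_quot_lift _ (continuous_cutModel k Y))
    (by
      rintro ⟨p⟩ ⟨q⟩ h
      exact Quot.sound ((cutModel_eq_cutModel_iff k Y p q).1 h))
    ((range_quot_lift _).trans (range_cutModel k Y))

lemma labelledPartitionSpaceHomeo_cutRelabel {n : ℕ} (Y : CutTree d n) (τ : Equiv.Perm (Fin k))
    (p : CutParam k Y) :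
    (labelledPartitionSpaceHomeo k Y (Quot.mk _ (cutRelabel k τ Y p)) : Y.Leaf → Fin k → ℝ) =
      relabel τ (labelledPartitionSpaceHomeo k Y (Quot.mk _ p)) :=
  cutModel_cutRelabel k τ Y p

end CutModel

theorem labelledPartitionSpace_homeo_join_general (d n k : ℕ)
    (Y : CutTree d n) :
    ∃ h : LabelledPartitionSpace k Y ≃ₜ nJoin (Fin k) n,
      ∀ (sg : Equiv.Perm (Fin k)) (p : CutParam k Y),
        h (Quot.mk _ (cutRelabel k sg Y p)) =
          nJoinMap (sg : Fin k → Fin k) n (h (Quot.mk _ p)) := by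
  obtain ⟨e⟩ : Nonempty (Y.Leaf ≃ nJoinIndex n) :=
    Fintype.card_eq.1 (Y.card_leaf.trans (card_nJoinIndex n).symm)
  let F := (labelledPartitionSpaceHomeo k Y).trans (joinModelCongr e)
  let G := nJoinHomeo (Fin k) n
  refine ⟨F.trans G.symm, fun sg p => ?_⟩
  show G.symm (F (Quot.mk _ (cutRelabel k sg Y p))) = nJoinMap sg n (G.symm (F (Quot.mk _ p)))
  rw [G.symm_apply_eq, Subtype.ext_iff, nJoinHomeo_nJoinMap, G.apply_symm_apply]
  exact congrArg (fun w i => w (e.symm i)) (labelledPartitionSpaceHomeo_cutRelabel k Y sg p)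

/-- For any scheme `Y ∈ V^n_d` of nested hyperplane cuts and any `k ≥ 2`, the labelled
partition space `C^n_{Y,k}` is `Σ_k`-equivariantly homeomorphic to the `(n+1)`-fold join
`EG^n = [k] * [k] * ⋯ * [k]` of a `k`-point discrete space, where `Σ_k` permutes the
labels on `C^n_{Y,k}` and acts on every join factor of `EG^n`. -/
theorem labelledPartitionSpace_homeo_join (d n k : ℕ) (hn : 0 < n) (hk : 2 ≤ k)
    (Y : CutTree d n) :
    ∃ h : LabelledPartitionSpace k Y ≃ₜ nJoin (Fin k) n,
      ∀ (sg : Equiv.Perm (Fin k)) (p : CutParam k Y),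
        h (Quot.mk _ (cutRelabel k sg Y p)) =
          nJoinMap (sg : Fin k → Fin k) n (h (Quot.mk _ p)) :=
  labelledPartitionSpace_homeo_join_general d n k Y
end

section
/- If the splitting result holds for k = l thieves with t(l-1) cuts and for k = m thieves with t(m-1) cuts, then it holds for k = lm thieves with t(lm-1) cuts; in particular the cut-count identity t(m-1) + m·t(l-1) = t(ml-1) holds for all positive integers t, l, m. -/
/-!
Give the necklace first to `m` groups, using `t(m-1)` cuts: group `α` gets a set `A α` of
`μ j`-measure `1/m` for every `j`. Conditioning each `μ j` on each `A α` yields `tm`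
probability measures, which `l` thieves split with `tm(l-1)` cuts into sets `B β`; thief
`(β, α)` is promised `A α ∩ B β`, of `μ j`-measure `1/(lm)`. Merging the two families of cuts
gives `t(m-1) + tm(l-1) = t(lm-1)` cuts, each interval of which lies in one interval of either
family, so it can be handed to the thief `(β, α)` whose set contains it. The shares obtained lie
inside the sets `A α ∩ B β` and still exhaust the line, so they have the same measures.
-/

open MeasureTheory

/-- The necklace splitting property for `k` thieves: any `t ≥ 1` absolutely continuous
probability measures on `ℝ` can be split evenly among `k` thieves using `t(k-1)` cuts. -/
def NecklaceSplit (k : ℕ) : Prop :=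
  ∀ t : ℕ, 0 < t → ∀ μ : Fin t → Measure ℝ,
    (∀ j, IsProbabilityMeasure (μ j)) → (∀ j, μ j ≪ volume) →
    ∃ x : Fin (t * (k - 1)) → ℝ, Monotone x ∧
      ∃ ℓ : Fin (t * (k - 1) + 1) → Fin k,
        ∀ (i : Fin k) (j : Fin t),
          μ j (⋃ r ∈ {r : Fin (t * (k - 1) + 1) | ℓ r = i}, cutInterval x r)
            = (k : ENNReal)⁻¹

open ProbabilityTheory Finset
open scoped ENNReal

theorem Fin.exists_mem_ge_of_lt_card {n : ℕ} {S : Finset (Fin n)} {j : Fin n}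
    (h : (j : ℕ) < #S) : ∃ j' ∈ S, j ≤ j' := by
  by_contra! hS
  have := card_le_card fun a ha => mem_Iio.2 (hS a ha)
  rw [Fin.card_Iio] at this
  omega

theorem Fin.exists_le_notMem_of_card_le {n : ℕ} {S : Finset (Fin n)} {j : Fin n}
    (h : #S ≤ (j : ℕ)) : ∃ j' ≤ j, j' ∉ S := by
  by_contra! hS
  have := card_le_card fun a ha => hS a (mem_Iic.1 ha)
  rw [Fin.card_Iic] at this
  omega

section CutInterval

variable {n : ℕ}

theorem measurableSet_cutInterval (x : Fin n → ℝ) (i : Fin (n + 1)) :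
    MeasurableSet (cutInterval x i) := by
  have : cutInterval x i =
      (⋂ (j : Fin n) (_ : (j : ℕ) < i), Set.Ici (x j)) ∩
        ⋂ (j : Fin n) (_ : (i : ℕ) ≤ j), Set.Iic (x j) := by
    ext r
    simp [cutInterval]
  rw [this]
  exact (MeasurableSet.iInter fun _ => .iInter fun _ => measurableSet_Ici).inter
    (MeasurableSet.iInter fun _ => .iInter fun _ => measurableSet_Iic)

theorem mem_cutInterval_card_lt {x : Fin n → ℝ} (hx : Monotone x) (s : ℝ) :
    s ∈ cutInterval x ⟨#{j | x j < s}, Nat.lt_succ_of_le (card_le_univ _ |>.trans_eq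
      (Fintype.card_fin n))⟩ := by
  constructor
  · intro j hj
    obtain ⟨j', hj', hjj'⟩ := Fin.exists_mem_ge_of_lt_card (S := {j | x j < s}) hj
    exact (hx hjj').trans (mem_filter.1 hj').2.le
  · intro j hj
    obtain ⟨j', hj'j, hj'⟩ := Fin.exists_le_notMem_of_card_le (S := {j | x j < s}) hj
    exact (not_lt.1 fun h => hj' (mem_filter.2 ⟨mem_univ _, h⟩)).trans (hx hj'j)

theorem iUnion_cutInterval {x : Fin n → ℝ} (hx : Monotone x) :
    ⋃ i, cutInterval x i = Set.univ :=
  Set.eq_univ_of_forall fun s => Set.mem_iUnion.2 ⟨_, mem_cutInterval_card_lt hx s⟩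

/-- The witness counts the cuts of `x` that `z` places before its `r`-th interval. -/
theorem exists_cutInterval_superset {a : ℕ} {x : Fin a → ℝ} {z : Fin n → ℝ} (hx : Monotone x)
    (hxz : Set.range x ⊆ Set.range z) (r : Fin (n + 1)) :
    ∃ p, cutInterval z r ⊆ cutInterval x p := by
  choose e he using Set.range_subset_iff.1 hxz
  refine ⟨⟨#{j | (e j : ℕ) < r}, Nat.lt_succ_of_le (card_le_univ _ |>.trans_eq
    (Fintype.card_fin a))⟩, fun s ⟨hlow, hup⟩ => ⟨fun j hj => ?_, fun j hj => ?_⟩⟩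
  · obtain ⟨j', hj', hjj'⟩ := Fin.exists_mem_ge_of_lt_card (S := {j | (e j : ℕ) < r}) hj
    calc x j ≤ x j' := hx hjj'
      _ = z (e j') := (he j').symm
      _ ≤ s := hlow _ (mem_filter.1 hj').2
  · obtain ⟨j', hj'j, hj'⟩ := Fin.exists_le_notMem_of_card_le (S := {j | (e j : ℕ) < r}) hj
    calc s ≤ z (e j') := hup _ (not_lt.1 fun h => hj' (mem_filter.2 ⟨mem_univ _, h⟩))
      _ = x j' := he j'
      _ ≤ x j := hx hj'j

theorem exists_common_refinement {a b : ℕ} {x : Fin a → ℝ} {y : Fin b → ℝ} (hx : Monotone x)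
    (hy : Monotone y) (hn : a + b = n) :
    ∃ z : Fin n → ℝ, Monotone z ∧
      ∃ (φ : Fin (n + 1) → Fin (a + 1)) (ψ : Fin (n + 1) → Fin (b + 1)), ∀ r,
        cutInterval z r ⊆ cutInterval x (φ r) ∩ cutInterval y (ψ r) := by
  subst hn
  set f := Fin.append x y
  set σ := Tuple.sort f
  have hxz : Set.range x ⊆ Set.range (f ∘ σ) :=
    Set.range_subset_iff.2 fun j => ⟨σ.symm (Fin.castAdd b j), by simp [f]⟩
  have hyz : Set.range y ⊆ Set.range (f ∘ σ) :=
    Set.range_subset_iff.2 fun j => ⟨σ.symm (Fin.natAdd a j), by simp [f]⟩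
  choose φ hφ using exists_cutInterval_superset hx hxz
  choose ψ hψ using exists_cutInterval_superset hy hyz
  exact ⟨f ∘ σ, Tuple.monotone_sort f, φ, ψ, fun r => Set.subset_inter (hφ r) (hψ r)⟩

theorem cutInterval_inter_subsingleton (x : Fin n → ℝ) {i i' : Fin (n + 1)} (h : i < i') :
    (cutInterval x i ∩ cutInterval x i').Subsingleton := by
  have hi : (i : ℕ) < n := by omega
  rintro s ⟨⟨-, hs⟩, ⟨hs', -⟩⟩ s' ⟨⟨-, hs''⟩, ⟨hs''', -⟩⟩
  exact ((hs ⟨i, hi⟩ le_rfl).antisymm (hs' ⟨i, hi⟩ h)).trans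
    ((hs'' ⟨i, hi⟩ le_rfl).antisymm (hs''' ⟨i, hi⟩ h)).symm

theorem aedisjoint_cutInterval (μ : Measure ℝ) [NullSingletonClass μ] (x : Fin n → ℝ) :
    Pairwise (Function.onFun (AEDisjoint μ) (cutInterval x)) := by
  intro i i' hne
  rcases hne.lt_or_gt with h | h
  · exact (cutInterval_inter_subsingleton x h).measure_zero μ
  · exact AEDisjoint.symm ((cutInterval_inter_subsingleton x h).measure_zero μ)

end CutInterval

theorem ENNReal.eq_of_le_of_sum_le {ι : Type*} {s : Finset ι} {f g : ι → ℝ≥0∞}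
    (hfg : ∀ i ∈ s, f i ≤ g i) (hsum : ∑ i ∈ s, g i ≤ ∑ i ∈ s, f i) (htop : ∑ i ∈ s, g i ≠ ∞)
    {i : ι} (hi : i ∈ s) : f i = g i := by
  classical
  refine (hfg i hi).antisymm ?_
  rw [← add_sum_erase s f hi, ← add_sum_erase s g hi] at hsum
  rw [← add_sum_erase s g hi] at htop
  have hrest : ∑ j ∈ s.erase i, f j ≤ ∑ j ∈ s.erase i, g j :=
    sum_le_sum fun j hj => hfg j (mem_of_mem_erase hj)
  exact (ENNReal.add_le_add_iff_right (ENNReal.add_ne_top.1 htop).2).1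
    (hsum.trans (add_le_add_right hrest _))

section CutPiece

variable {n k : ℕ}

/-- The share of thief `i` in `NecklaceSplit`. -/
def cutPiece (x : Fin n → ℝ) (ℓ : Fin (n + 1) → Fin k) (i : Fin k) : Set ℝ :=
  ⋃ r ∈ {r : Fin (n + 1) | ℓ r = i}, cutInterval x r

theorem cutPiece_subset {x : Fin n → ℝ} {ℓ : Fin (n + 1) → Fin k} {Q : Fin k → Set ℝ}
    (h : ∀ r, cutInterval x r ⊆ Q (ℓ r)) (i : Fin k) : cutPiece x ℓ i ⊆ Q i :=
  Set.iUnion₂_subset fun r hr => hr ▸ h r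

theorem cutInterval_subset_cutPiece (x : Fin n → ℝ) (ℓ : Fin (n + 1) → Fin k) (r : Fin (n + 1)) :
    cutInterval x r ⊆ cutPiece x ℓ (ℓ r) :=
  Set.subset_biUnion_of_mem (u := fun r => cutInterval x r) rfl

theorem cutPiece_eq_biUnion_finset (x : Fin n → ℝ) (ℓ : Fin (n + 1) → Fin k) (i : Fin k) :
    cutPiece x ℓ i = ⋃ r ∈ ({r | ℓ r = i} : Finset _), cutInterval x r := by
  simp [cutPiece]

theorem measurableSet_cutPiece (x : Fin n → ℝ) (ℓ : Fin (n + 1) → Fin k) (i : Fin k) :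
    MeasurableSet (cutPiece x ℓ i) := by
  rw [cutPiece_eq_biUnion_finset]
  exact Finset.measurableSet_biUnion _ fun r _ => measurableSet_cutInterval x r

variable (μ : Measure ℝ) [NullSingletonClass μ]

theorem measure_cutPiece (x : Fin n → ℝ) (ℓ : Fin (n + 1) → Fin k) (i : Fin k) :
    μ (cutPiece x ℓ i) = ∑ r with ℓ r = i, μ (cutInterval x r) := by
  rw [cutPiece_eq_biUnion_finset, measure_biUnion_finset₀
    ((aedisjoint_cutInterval μ x).set_pairwise _)
    fun r _ => (measurableSet_cutInterval x r).nullMeasurableSet]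

theorem sum_measure_cutPiece {x : Fin n → ℝ} (hx : Monotone x) (ℓ : Fin (n + 1) → Fin k) :
    ∑ i, μ (cutPiece x ℓ i) = μ Set.univ := by
  simp_rw [measure_cutPiece, sum_fiberwise]
  rw [← iUnion_cutInterval hx, ← measure_biUnion_finset₀ (s := univ)
    ((aedisjoint_cutInterval μ x).set_pairwise _)
    fun r _ => (measurableSet_cutInterval x r).nullMeasurableSet]
  simp

/-- The pieces exhaust the line, so their measures cannot fall short of those of the `Q i`. -/
theorem measure_cutPiece_eq_of_subset [IsFiniteMeasure μ] {x : Fin n → ℝ} (hx : Monotone x)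
    {ℓ : Fin (n + 1) → Fin k} {Q : Fin k → Set ℝ} (hQ : ∀ r, cutInterval x r ⊆ Q (ℓ r))
    (hsum : ∑ i, μ (Q i) ≤ μ Set.univ) (i : Fin k) : μ (cutPiece x ℓ i) = μ (Q i) :=
  ENNReal.eq_of_le_of_sum_le (fun i _ => measure_mono (cutPiece_subset hQ i))
    (hsum.trans_eq (sum_measure_cutPiece μ hx ℓ).symm)
    (ne_top_of_le_ne_top (measure_ne_top μ _) hsum) (mem_univ i)

end CutPiece

theorem mul_sub_one_add_mul_mul_sub_one (t l m : ℕ) (hl : 0 < l) :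
    t * (m - 1) + m * (t * (l - 1)) = t * (m * l - 1) := by
  obtain ⟨l, rfl⟩ := Nat.exists_eq_add_one_of_ne_zero hl.ne'
  rcases m with _ | m
  · simp
  · have : (m + 1) * (l + 1) - 1 = m * l + m + l := by ring_nf; omega
    rw [this, Nat.add_sub_cancel, Nat.add_sub_cancel]
    ring

theorem measure_inter_eq_of_cond {Ω : Type*} [MeasurableSpace Ω] {μ : Measure Ω} {s u : Set Ω}
    (hs : MeasurableSet s) {l m : ℕ} (hm : m ≠ 0) (hμs : μ s = (m : ℝ≥0∞)⁻¹)
    (hcond : μ[u|s] = (l : ℝ≥0∞)⁻¹) : μ (s ∩ u) = ((l * m : ℕ) : ℝ≥0∞)⁻¹ := by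
  rw [cond_apply hs, hμs, inv_inv,
    ← ENNReal.eq_div_iff (by simpa using hm) (ENNReal.natCast_ne_top m)] at hcond
  rw [hcond, Nat.cast_mul, ENNReal.mul_inv (.inr (ENNReal.natCast_ne_top m))
    (.inl (ENNReal.natCast_ne_top l)), div_eq_mul_inv]

/-- **Multiplicativity of necklace splitting.**  If the splitting result holds for `l`
thieves (with `t(l-1)` cuts) and for `m` thieves (with `t(m-1)` cuts), then it holds for
`l·m` thieves with `t(lm-1)` cuts; in particular the cut-count identity
`t(m-1) + m·t(l-1) = t(ml-1)` holds for all positive integers `t, l, m`. -/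
theorem necklaceSplit_mul (l m : ℕ) (hl : 0 < l) (hm : 0 < m)
    (Hl : NecklaceSplit l) (Hm : NecklaceSplit m) :
    NecklaceSplit (l * m) ∧
      ∀ t l' m' : ℕ, 0 < t → 0 < l' → 0 < m' →
        t * (m' - 1) + m' * (t * (l' - 1)) = t * (m' * l' - 1) := by
  refine ⟨fun t ht μ hμ hac => ?_,
    fun t l' m' _ hl' _ => mul_sub_one_add_mul_mul_sub_one t l' m' hl'⟩
  have (j : Fin t) : NullSingletonClass (μ j) := ⟨fun s => hac j (measure_singleton s)⟩
  obtain ⟨x, hx, ℓx, hA⟩ := Hm t ht μ hμ hac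
  let A := cutPiece x ℓx
  replace hA : ∀ α j, μ j (A α) = (m : ℝ≥0∞)⁻¹ := hA
  let e : Fin t × Fin m ≃ Fin (t * m) := finProdFinEquiv
  obtain ⟨y, hy, ℓy, hB⟩ := Hl (t * m) (Nat.mul_pos ht hm)
    (fun p => (μ (e.symm p).1)[|A (e.symm p).2])
    (fun p => cond_isProbabilityMeasure (by simp [hA]))
    (fun p => cond_absolutelyContinuous.trans (hac _))
  let B := cutPiece y ℓy
  replace hB : ∀ β p, (μ (e.symm p).1)[B β|A (e.symm p).2] = (l : ℝ≥0∞)⁻¹ := hB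
  have hAB (α : Fin m) (β : Fin l) (j : Fin t) : μ j (A α ∩ B β) = ((l * m : ℕ) : ℝ≥0∞)⁻¹ :=
    measure_inter_eq_of_cond (measurableSet_cutPiece x ℓx α) hm.ne' (hA α j)
      (by simpa using hB β (e (j, α)))
  obtain ⟨z, hz, φ, ψ, hzxy⟩ := exists_common_refinement hx hy
    (show t * (m - 1) + t * m * (l - 1) = t * (l * m - 1) by
      rw [mul_comm l, ← mul_sub_one_add_mul_mul_sub_one t l m hl]; ring)
  let f : Fin l × Fin m ≃ Fin (l * m) := finProdFinEquiv
  let ℓz r := f (ℓy (ψ r), ℓx (φ r))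
  let Q i := A (f.symm i).2 ∩ B (f.symm i).1
  refine ⟨z, hz, ℓz, fun i j => ?_⟩
  have hQ (r) : cutInterval z r ⊆ Q (ℓz r) := by
    simp only [Q, ℓz, Equiv.symm_apply_apply]
    exact (hzxy r).trans (Set.inter_subset_inter (cutInterval_subset_cutPiece x ℓx _)
      (cutInterval_subset_cutPiece y ℓy _))
  have hsum : ∑ i, μ j (Q i) ≤ μ j Set.univ := by
    simp only [Q, hAB, sum_const, card_univ, Fintype.card_fin, nsmul_eq_mul, measure_univ]
    exact (ENNReal.mul_inv_cancel (by simp [hl.ne', hm.ne']) (ENNReal.natCast_ne_top _)).le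
  exact (measure_cutPiece_eq_of_subset (μ j) hz hQ hsum i).trans (hAB _ _ j)
end

section
/- For every d ≥ 1 there exist three absolutely continuous probability measures μ_1, μ_2, μ_3 on R^d such that no translated closed orthant O = {x ∈ R^d : x_i ≤ c_i for all i} (with any choice of orientation of each coordinate) satisfies μ_j(O) = 1/2 for j = 1, 2, 3. -/
/-!
Take the three unit-diameter balls around `v`, `2v`, `3v` with `v = (1, …, 1)` and let `μ j` be
normalized Lebesgue measure on the `j`-th ball. Every coordinate constraint of an orthant cuts out
a half-line, so an orthant containing two points contains every point lying coordinatewise between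
them. The middle ball lies coordinatewise between the outer two; hence an orthant carrying positive
mass of both outer measures contains the middle ball and has full mass for the middle measure.
-/

open MeasureTheory ProbabilityTheory Metric Set

def orthant {ι : Type*} (ε : ι → Bool) (c : ι → EReal) : Set (EuclideanSpace ℝ ι) :=
  {x | ∀ i, (((if ε i then x i else -x i) : ℝ) : EReal) ≤ c i}

lemma ordConnected_orthant_coord (b : Bool) (c : EReal) :
    OrdConnected {t : ℝ | (((if b then t else -t) : ℝ) : EReal) ≤ c} := by
  cases b
  · exact IsUpperSet.ordConnected fun s t hst hs =>
      le_trans (EReal.coe_le_coe_iff.2 (neg_le_neg hst)) hs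
  · exact IsLowerSet.ordConnected fun s t hts hs => le_trans (EReal.coe_le_coe_iff.2 hts) hs

lemma mem_orthant_of_forall_mem_uIcc {ι : Type*} {ε : ι → Bool} {c : ι → EReal}
    {p q y : EuclideanSpace ℝ ι} (hp : p ∈ orthant ε c) (hq : q ∈ orthant ε c)
    (hy : ∀ i, y i ∈ uIcc (p i) (q i)) : y ∈ orthant ε c :=
  fun i => (ordConnected_orthant_coord (ε i) (c i)).uIcc_subset (hp i) (hq i) (hy i)

def diagPoint {ι : Type*} (t : ℝ) : EuclideanSpace ℝ ι := WithLp.toLp 2 fun _ => t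

lemma apply_mem_ball_of_mem_ball_diagPoint {ι : Type*} [Fintype ι] {t r : ℝ}
    {x : EuclideanSpace ℝ ι} (hx : x ∈ ball (diagPoint t) r) (i : ι) : x i ∈ ball t r :=
  (PiLp.dist_apply_le x (diagPoint t) i).trans_lt hx

lemma ball_diagPoint_subset_orthant {ι : Type*} [Fintype ι] {ε : ι → Bool} {c : ι → EReal}
    {t r : ℝ} (hleft : (ball (diagPoint (t - 2 * r)) r ∩ orthant ε c).Nonempty)
    (hright : (ball (diagPoint (t + 2 * r)) r ∩ orthant ε c).Nonempty) :
    ball (diagPoint t) r ⊆ orthant ε c := by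
  obtain ⟨p, hpball, hp⟩ := hleft
  obtain ⟨q, hqball, hq⟩ := hright
  refine fun y hy => mem_orthant_of_forall_mem_uIcc hp hq fun i => ?_
  have hpi := mem_ball_iff_norm.1 (apply_mem_ball_of_mem_ball_diagPoint hpball i)
  have hqi := mem_ball_iff_norm.1 (apply_mem_ball_of_mem_ball_diagPoint hqball i)
  have hyi := mem_ball_iff_norm.1 (apply_mem_ball_of_mem_ball_diagPoint hy i)
  rw [Real.norm_eq_abs, abs_lt] at hpi hqi hyi
  exact Icc_subset_uIcc ⟨by linarith, by linarith⟩

lemma isProbabilityMeasure_cond_ball {X : Type*} [MetricSpace X] [ProperSpace X]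
    [MeasurableSpace X] [BorelSpace X] {μ : Measure X} [μ.IsOpenPosMeasure]
    [IsFiniteMeasureOnCompacts μ] (x : X) {r : ℝ} (hr : 0 < r) :
    IsProbabilityMeasure μ[|ball x r] :=
  cond_isProbabilityMeasure_of_finite (isOpen_ball.measure_ne_zero μ (nonempty_ball.2 hr))
    measure_ball_lt_top.ne

lemma nonempty_inter_of_cond_ne_zero {Ω : Type*} [MeasurableSpace Ω] {μ : Measure Ω}
    {s t : Set Ω} (hs : MeasurableSet s) (hst : μ[t | s] ≠ 0) : (s ∩ t).Nonempty :=
  nonempty_of_measure_ne_zero (inter_pos_of_cond_ne_zero hs hst).ne'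

lemma cond_eq_one_of_subset {Ω : Type*} [MeasurableSpace Ω] {μ : Measure Ω} {s t : Set Ω}
    (hs₀ : μ s ≠ 0) (hs : μ s ≠ ⊤) (hst : s ⊆ t) : μ[t | s] = 1 :=
  have := cond_isProbabilityMeasure_of_finite hs₀ hs
  le_antisymm prob_le_one ((cond_apply_self hs₀ hs).symm.le.trans (measure_mono hst))

theorem orthant_halving_fails_general (d : ℕ) :
    ∃ μ : Fin 3 → Measure (EuclideanSpace ℝ (Fin d)),
      (∀ j, IsProbabilityMeasure (μ j)) ∧ (∀ j, μ j ≪ volume) ∧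
      ∀ (ε : Fin d → Bool) (c : Fin d → EReal),
        ∃ j, μ j {x : EuclideanSpace ℝ (Fin d) |
            ∀ i, (((if ε i then x i else -x i) : ℝ) : EReal) ≤ c i} ≠ 1 / 2 := by
  set ν : ℝ → Measure (EuclideanSpace ℝ (Fin d)) :=
    fun t => volume[|ball (diagPoint t) (1 / 2)]
  refine ⟨![ν 1, ν 2, ν 3], fun j => ?_, fun j => ?_, fun ε c => ?_⟩
  · fin_cases j <;> exact isProbabilityMeasure_cond_ball _ one_half_pos
  · fin_cases j <;> exact cond_absolutelyContinuous
  by_contra! hhalf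
  have hmid : ball (diagPoint 2) (1 / 2) ⊆ orthant ε c := by
    refine ball_diagPoint_subset_orthant ?_ ?_ <;> norm_num
    · exact nonempty_inter_of_cond_ne_zero measurableSet_ball
        ((hhalf 0).trans_ne (by norm_num))
    · exact nonempty_inter_of_cond_ne_zero measurableSet_ball
        ((hhalf 2).trans_ne (by norm_num))
  have hfull : ν 2 (orthant ε c) = 1 :=
    cond_eq_one_of_subset (isOpen_ball.measure_ne_zero volume (nonempty_ball.2 one_half_pos))
      measure_ball_lt_top.ne hmid
  exact (ENNReal.half_lt_self one_ne_zero ENNReal.one_ne_top).ne' (hfull.symm.trans (hhalf 1))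

/-- For every `d ≥ 1` there are three absolutely continuous probability measures on `ℝ^d`
such that no translated closed orthant (with any choice of orientation `ε i` of each
coordinate and constants `c i ∈ ℝ ∪ {±∞}`) contains exactly half of each of them. -/
theorem orthant_halving_fails (d : ℕ) (hd : 1 ≤ d) :
    ∃ μ : Fin 3 → Measure (EuclideanSpace ℝ (Fin d)),
      (∀ j, IsProbabilityMeasure (μ j)) ∧ (∀ j, μ j ≪ volume) ∧
      ∀ (ε : Fin d → Bool) (c : Fin d → EReal),
        ∃ j, μ j {x : EuclideanSpace ℝ (Fin d) |
            ∀ i, (((if ε i then x i else -x i) : ℝ) : EReal) ≤ c i} ≠ 1 / 2 :=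
  orthant_halving_fails_general d
end

section
/- Let v ∈ R^d be a vector with all coordinates nonzero and not parallel to any standard basis vector (d ≥ 2). Then no boundary of a translated orthant contains all three points v, 2v, 3v; that is, there is no choice of signs ε_i and constants c_i such that all three points lie in the set {x : ε_i x_i ≤ c_i for all i, with equality ε_i x_i = c_i for at least one i}. -/
/-- Let `v ∈ ℝ^d` (`d ≥ 2`) have all coordinates nonzero (so it is not parallel to any
standard basis vector).  Then no boundary of a translated orthant contains all three
points `v`, `2v`, `3v`: there is no choice of signs `ε i` and constants `c i` such that
each of the three points satisfies `ε i • xᵢ ≤ c i` in every coordinate with equality in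
at least one coordinate. -/
theorem no_orthant_boundary_through_collinear (d : ℕ) (hd : 2 ≤ d)
    (v : EuclideanSpace ℝ (Fin d)) (hv : ∀ i, v i ≠ 0) :
    ¬ ∃ (ε : Fin d → Bool) (c : Fin d → ℝ),
        ∀ m : Fin 3,
          (∀ i, (if ε i then ((m : ℕ) + 1 : ℝ) * v i else -(((m : ℕ) + 1 : ℝ) * v i))
              ≤ c i) ∧
          (∃ i, (if ε i then ((m : ℕ) + 1 : ℝ) * v i else -(((m : ℕ) + 1 : ℝ) * v i))
              = c i) := by
  rintro ⟨ε, c, h⟩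
  obtain ⟨i, hi⟩ := (h 1).2
  have h0 := (h 0).1 i
  have h2 := (h 2).1 i
  have hvi := hv i
  cases hb : ε i <;> simp [hb] at hi h0 h2 <;> exact hvi (by linarith)
end
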